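/- arXiv:1312.7569 — 6 statements merged into one kernel-verified Lean document; each statement's English description precedes it below -/
import Mathlib

section
/- Let p be a prime, let p' be the smallest prime greater than p, and let s = (c_1, ..., c_j) be a constellation of j gaps such that j < p' - 1 and c_1 + ... + c_j < 2p'. Let S be the set of all constellations of length j+1 obtained from s by replacing a single entry c_i by an ordered pair (a, b) of positive integers with a + b = c_i (i.e., the constellations which produce s upon one addition of adjacent entries). Then N_{p'}(s) = (p' - (j+1)) · N_p(s) + Σ_{s̄ ∈ S} N_p(s̄). -/
open Finset

/-- `b` is the next totative of `P` after `a`: `a < b`, `b` is coprime to `P`,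
and no integer strictly between `a` and `b` is coprime to `P`. -/
def IsNextTot (P a b : ℕ) : Prop :=
  a < b ∧ Nat.Coprime b P ∧ ∀ x, a < x → x < b → ¬ Nat.Coprime x P

/-- Starting at `r`, the successive totatives of `P` after `r` occur at the
successive partial sums of the list of gaps `c`. -/
def MatchesGaps (P : ℕ) : ℕ → List ℕ → Prop
  | _, [] => True
  | r, c :: cs => IsNextTot P r (r + c) ∧ MatchesGaps P (r + c) cs

open scoped Classical in
/-- `Ncount p s` : the number of (cyclic) occurrences of the constellation `s`
in the cycle of gaps `𝒢(p#)`.  Since the pattern of coprimality to `p#` is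
periodic with period `p#`, this is the number of totatives `r ∈ [1, p#]` of `p#`
at which the gap pattern `s` begins. -/
noncomputable def Ncount (p : ℕ) (s : List ℕ) : ℕ :=
  ((Finset.Icc 1 (primorial p)).filter
    (fun r => Nat.Coprime r (primorial p) ∧ MatchesGaps (primorial p) r s)).card

open scoped Classical in
/-- `nCount p g j` : the number of (cyclic) occurrences in `𝒢(p#)` of
constellations of length `j` with sum `g` (the driving terms of length `j`
for the gap `g`). -/
noncomputable def nCount (p g j : ℕ) : ℕ :=
  ((Finset.Icc 1 (primorial p)).filter
    (fun r => Nat.Coprime r (primorial p) ∧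
      ∃ c : List ℕ, c.length = j ∧ c.sum = g ∧ MatchesGaps (primorial p) r c)).card

/-- The set of constellations of length `s.length + 1` which produce `s` upon one
addition of adjacent entries: each is obtained from `s` by replacing a single entry
`c_i` by an ordered pair `(a, b)` of positive integers with `a + b = c_i`. -/
def refinements (s : List ℕ) : Finset (List ℕ) :=
  (Finset.range s.length).biUnion fun i =>
    (Finset.Ico 1 (s.getD i 0)).image fun a =>
      s.take i ++ [a, s.getD i 0 - a] ++ s.drop (i + 1)

/-!
The totatives of `p'# = p' * p#` in `[1, p'#]` are the numbers `r + k * p#`, with `r` a totative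
of `p#` in `[1, p#]` and `k < p'`, that `p'` does not divide. As `p#` is even and `p'` odd, two
multiples of `p'` coprime to `p#` are at least `2 * p'` apart, so passing from `p#` to `p'#`
removes at most one totative from a window of length `s.sum < 2 * p'`. Hence `s` occurs at
`r + k * p#` in `𝒢(p'#)` iff either `s` occurs at `r` in `𝒢(p#)` and `p'` divides none of its
`j + 1` points, or a refinement of `s` occurs at `r` and `p'` divides the point it inserts.
For each point there is exactly one `k < p'` making it divisible by `p'`, and distinct points
need distinct `k`; so the first case has `p' - (j + 1)` lifts and the second exactly one.
-/

def OccursAt (P r : ℕ) (c : List ℕ) : Prop :=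
  Nat.Coprime r P ∧ MatchesGaps P r c

def gapPoints (r : ℕ) (c : List ℕ) : Set ℕ :=
  {x | ∃ i ≤ c.length, x = r + (c.take i).sum}

def splitGap (s : List ℕ) (i a : ℕ) : List ℕ :=
  s.take i ++ [a, s.getD i 0 - a] ++ s.drop (i + 1)

section PartialSums

variable {c : List ℕ} {i k : ℕ}

theorem sum_take_lt_sum_take (hc : ∀ x ∈ c, 0 < x) (hik : i < k) (hi : i < c.length) :
    (c.take i).sum < (c.take k).sum := by
  have hsucc := List.sum_take_succ c i hi
  have hmono : (c.take (i + 1)).sum ≤ (c.take k).sum := List.monotone_sum_take c hik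
  have hpos := hc _ (List.getElem_mem hi)
  omega

theorem sum_take_injOn (hc : ∀ x ∈ c, 0 < x) :
    Set.InjOn (fun i => (c.take i).sum) (Set.Iic c.length) := by
  intro i hi k hk h
  simp only [Set.mem_Iic] at hi hk
  by_contra hne
  rcases Nat.lt_or_gt_of_ne hne with hlt | hlt
  · exact (sum_take_lt_sum_take hc hlt (by omega)).ne h
  · exact (sum_take_lt_sum_take hc hlt (by omega)).ne h.symm

theorem sum_take_le_sum (c : List ℕ) (i : ℕ) : (c.take i).sum ≤ c.sum :=
  (List.take_sublist i c).sum_le_sum fun _ _ => Nat.zero_le _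

theorem exists_sum_take_lt_le (c : List ℕ) {d : ℕ} (hd0 : 0 < d) (hd : d ≤ c.sum) :
    ∃ i < c.length, (c.take i).sum < d ∧ d ≤ (c.take (i + 1)).sum := by
  induction c generalizing d with
  | nil => simp only [List.sum_nil] at hd; omega
  | cons x c ih =>
    by_cases hdx : d ≤ x
    · exact ⟨0, by simp, by simpa using hd0, by simpa using hdx⟩
    · simp only [List.sum_cons] at hd
      obtain ⟨i, hi, hlo, hhi⟩ := ih (d := d - x) (by omega) (by omega)
      refine ⟨i + 1, Nat.succ_lt_succ hi, ?_, ?_⟩ <;>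
        simp only [List.take_succ_cons, List.sum_cons] <;> omega

end PartialSums

section GapPoints

variable {r x : ℕ} {c c' : List ℕ}

theorem mem_gapPoints_nil : x ∈ gapPoints r [] ↔ x = r := by
  simp [gapPoints]

theorem mem_gapPoints_cons {d : ℕ} :
    x ∈ gapPoints r (d :: c) ↔ x = r ∨ x ∈ gapPoints (r + d) c := by
  simp only [gapPoints, Set.mem_ofPred_eq, List.length_cons]
  constructor
  · rintro ⟨_ | i, hi, rfl⟩
    · simp
    · exact Or.inr ⟨i, by omega, by simp [add_assoc]⟩
  · rintro (rfl | ⟨i, hi, rfl⟩)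
    · exact ⟨0, by omega, by simp⟩
    · exact ⟨i + 1, by omega, by simp [add_assoc]⟩

theorem self_mem_gapPoints : r ∈ gapPoints r c :=
  ⟨0, Nat.zero_le _, by simp⟩

theorem add_sum_mem_gapPoints : r + c.sum ∈ gapPoints r c :=
  ⟨c.length, le_rfl, by simp⟩

theorem bounds_of_mem_gapPoints (h : x ∈ gapPoints r c) : r ≤ x ∧ x ≤ r + c.sum := by
  obtain ⟨i, -, rfl⟩ := h
  exact ⟨Nat.le_add_right _ _, Nat.add_le_add_left (sum_take_le_sum c i) r⟩

theorem mem_gapPoints_append :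
    x ∈ gapPoints r (c ++ c') ↔ x ∈ gapPoints r c ∨ x ∈ gapPoints (r + c.sum) c' := by
  induction c generalizing r with
  | nil =>
    simp only [List.nil_append, mem_gapPoints_nil, List.sum_nil, add_zero]
    exact ⟨Or.inr, fun h => h.elim (· ▸ self_mem_gapPoints) id⟩
  | cons d c ih =>
    simp only [List.cons_append, mem_gapPoints_cons, ih, List.sum_cons, add_assoc, or_assoc]

theorem mem_gapPoints_iff_take_drop {s : List ℕ} {i : ℕ} (hi : i < s.length) :
    x ∈ gapPoints r s ↔ x ∈ gapPoints r (s.take i) ∨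
      x ∈ gapPoints (r + (s.take i).sum + s.getD i 0) (s.drop (i + 1)) := by
  conv_lhs => rw [← List.take_append_drop i s, List.drop_eq_getElem_cons hi]
  rw [mem_gapPoints_append, mem_gapPoints_cons, List.getD_eq_getElem _ _ hi]
  constructor
  · rintro (h | rfl | h)
    · exact Or.inl h
    · exact Or.inl add_sum_mem_gapPoints
    · exact Or.inr h
  · rintro (h | h)
    · exact Or.inl h
    · exact Or.inr (Or.inr h)

end GapPoints

section SplitGap

variable {s : List ℕ} {i a r x : ℕ}

theorem mem_refinements {t : List ℕ} :
    t ∈ refinements s ↔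
      ∃ i < s.length, ∃ a, 0 < a ∧ a < s.getD i 0 ∧ t = splitGap s i a := by
  simp only [refinements, splitGap, mem_biUnion, mem_range, mem_image, mem_Ico]
  constructor
  · rintro ⟨i, hi, a, ⟨ha0, ha⟩, rfl⟩
    exact ⟨i, hi, a, ha0, ha, rfl⟩
  · rintro ⟨i, hi, a, ha0, ha, rfl⟩
    exact ⟨i, hi, a, ⟨ha0, ha⟩, rfl⟩

theorem length_splitGap (hi : i < s.length) : (splitGap s i a).length = s.length + 1 := by
  simp only [splitGap, List.length_append, List.length_take, List.length_drop, List.length_cons,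
    List.length_nil]
  omega

theorem sum_splitGap (hi : i < s.length) (ha : a ≤ s.getD i 0) :
    (splitGap s i a).sum = s.sum := by
  conv_rhs => rw [← List.take_append_drop i s, List.drop_eq_getElem_cons hi]
  rw [List.getD_eq_getElem _ _ hi] at ha
  simp only [splitGap, List.getD_eq_getElem _ _ hi, List.sum_append, List.sum_cons, List.sum_nil]
  omega

theorem pos_of_mem_splitGap (hs : ∀ x ∈ s, 0 < x) (ha0 : 0 < a) (ha : a < s.getD i 0) :
    ∀ x ∈ splitGap s i a, 0 < x := by
  intro x hx
  simp only [splitGap, List.mem_append, List.mem_cons, List.not_mem_nil, or_false] at hx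
  rcases hx with (hx | rfl | rfl) | hx
  · exact hs x (List.mem_of_mem_take hx)
  · exact ha0
  · omega
  · exact hs x (List.mem_of_mem_drop hx)

theorem mem_gapPoints_splitGap (hi : i < s.length) (ha : a ≤ s.getD i 0) :
    x ∈ gapPoints r (splitGap s i a) ↔ x ∈ gapPoints r s ∨ x = r + (s.take i).sum + a := by
  rw [mem_gapPoints_iff_take_drop hi, splitGap, List.append_assoc, mem_gapPoints_append,
    List.cons_append, List.cons_append, List.nil_append, mem_gapPoints_cons, mem_gapPoints_cons,
    show r + (s.take i).sum + a + (s.getD i 0 - a) = r + (s.take i).sum + s.getD i 0 by omega]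
  constructor
  · rintro (h | rfl | rfl | h)
    · exact Or.inl (Or.inl h)
    · exact Or.inl (Or.inl add_sum_mem_gapPoints)
    · exact Or.inr rfl
    · exact Or.inl (Or.inr h)
  · rintro ((h | h) | rfl)
    · exact Or.inl h
    · exact Or.inr (Or.inr (Or.inr h))
    · exact Or.inr (Or.inr (Or.inl rfl))

theorem notMem_gapPoints (hi : i < s.length) (ha0 : 0 < a) (ha : a < s.getD i 0) :
    r + (s.take i).sum + a ∉ gapPoints r s := by
  rw [mem_gapPoints_iff_take_drop hi]
  rintro (h | h)
  · have := (bounds_of_mem_gapPoints h).2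
    omega
  · have := (bounds_of_mem_gapPoints h).1
    omega

end SplitGap

section Occurrence

variable {P r : ℕ} {c : List ℕ}

theorem IsNextTot.eq {a b b' : ℕ} (h : IsNextTot P a b) (h' : IsNextTot P a b') : b = b' := by
  obtain ⟨hab, hb, hgap⟩ := h
  obtain ⟨hab', hb', hgap'⟩ := h'
  by_contra hne
  rcases Nat.lt_or_gt_of_ne hne with hlt | hlt
  · exact hgap' b hab hlt hb
  · exact hgap b' hab' hlt hb'

theorem MatchesGaps.eq_of_length_eq {c' : List ℕ} (h : MatchesGaps P r c)
    (h' : MatchesGaps P r c') (hl : c.length = c'.length) : c = c' := by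
  induction c generalizing c' r with
  | nil => exact (List.eq_nil_of_length_eq_zero hl.symm).symm
  | cons d c ih =>
    obtain _ | ⟨d', c'⟩ := c'
    · simp at hl
    · obtain rfl : d = d' := by
        have := h.1.eq h'.1
        omega
      rw [ih h.2 h'.2 (by simpa using hl)]

theorem isNextTot_add_mul_iff {a b k : ℕ} :
    IsNextTot P (a + k * P) (b + k * P) ↔ IsNextTot P a b := by
  simp only [IsNextTot, Nat.coprime_add_mul_right_left, add_lt_add_iff_right]
  refine and_congr_right fun hab => and_congr_right fun _ =>
    ⟨fun h x h1 h2 => ?_, fun h x h1 h2 => ?_⟩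
  · rw [← Nat.coprime_add_mul_right_left x P k]
    exact h _ (by omega) (by omega)
  · obtain ⟨y, rfl⟩ : ∃ y, x = y + k * P := ⟨x - k * P, by omega⟩
    rw [Nat.coprime_add_mul_right_left]
    exact h y (by omega) (by omega)

theorem matchesGaps_add_mul_iff {k : ℕ} : MatchesGaps P (r + k * P) c ↔ MatchesGaps P r c := by
  induction c generalizing r with
  | nil => exact Iff.rfl
  | cons d c ih =>
    simp only [MatchesGaps, add_right_comm r (k * P) d, isNextTot_add_mul_iff, ih]

theorem occursAt_add_mul_iff {k : ℕ} : OccursAt P (r + k * P) c ↔ OccursAt P r c := by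
  simp only [OccursAt, Nat.coprime_add_mul_right_left, matchesGaps_add_mul_iff]

theorem occursAt_iff (hc : ∀ x ∈ c, 0 < x) :
    OccursAt P r c ↔
      ∀ x, r ≤ x → x ≤ r + c.sum → (x.Coprime P ↔ x ∈ gapPoints r c) := by
  induction c generalizing r with
  | nil =>
    simp only [OccursAt, MatchesGaps, and_true, List.sum_nil, add_zero, mem_gapPoints_nil]
    refine ⟨fun h x h1 h2 => ?_, fun h => by simpa using h r le_rfl le_rfl⟩
    obtain rfl : x = r := by omega
    simpa using h
  | cons d c ih =>
    have hd : 0 < d := hc d List.mem_cons_self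
    have hunfold : OccursAt P r (d :: c) ↔
        r.Coprime P ∧ (∀ x, r < x → x < r + d → ¬ x.Coprime P) ∧
          OccursAt P (r + d) c := by
      simp only [OccursAt, MatchesGaps, IsNextTot]
      exact ⟨fun ⟨hr, ⟨_, hrd, hgap⟩, hm⟩ => ⟨hr, hgap, hrd, hm⟩,
        fun ⟨hr, hgap, hrd, hm⟩ => ⟨hr, ⟨by omega, hrd, hgap⟩, hm⟩⟩
    rw [hunfold, ih fun x hx => hc x (List.mem_cons_of_mem d hx)]
    simp only [List.sum_cons, mem_gapPoints_cons]
    constructor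
    · rintro ⟨hr, hgap, hrest⟩ x h1 h2
      rcases Nat.eq_or_lt_of_le h1 with rfl | h1
      · exact iff_of_true hr (Or.inl rfl)
      by_cases hx : x < r + d
      · refine iff_of_false (hgap x h1 hx) ?_
        rintro (rfl | hmem)
        · omega
        · have := (bounds_of_mem_gapPoints hmem).1
          omega
      · rw [hrest x (by omega) (by omega)]
        exact ⟨Or.inr, fun h => h.resolve_left (by omega)⟩
    · intro h
      refine ⟨(h r le_rfl (by omega)).2 (Or.inl rfl), fun x h1 h2 hx => ?_, fun x h1 h2 => ?_⟩
      · rcases (h x h1.le (by omega)).1 hx with rfl | hmem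
        · omega
        · have := (bounds_of_mem_gapPoints hmem).1
          omega
      · rw [h x (by omega) (by omega)]
        exact ⟨fun h => h.resolve_left (by omega), Or.inr⟩

theorem OccursAt.coprime_of_mem (hc : ∀ x ∈ c, 0 < x) (h : OccursAt P r c) {x : ℕ}
    (hx : x ∈ gapPoints r c) : x.Coprime P :=
  ((occursAt_iff hc).1 h x (bounds_of_mem_gapPoints hx).1 (bounds_of_mem_gapPoints hx).2).2 hx

end Occurrence

theorem coprime_prime_mul_iff {q P x : ℕ} (hq : q.Prime) :
    x.Coprime (q * P) ↔ x.Coprime P ∧ ¬ q ∣ x := by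
  rw [Nat.coprime_mul_iff_right, and_comm, ← hq.coprime_iff_not_dvd, Nat.coprime_comm (m := q)]

theorem eq_of_dvd_of_coprime_of_lt {P q x y : ℕ} (hP : 2 ∣ P) (hq : Odd q)
    (hx : x.Coprime P) (hy : y.Coprime P) (hqx : q ∣ x) (hqy : q ∣ y)
    (hxy : x < y + 2 * q) (hyx : y < x + 2 * q) : x = y := by
  wlog hle : x ≤ y generalizing x y
  · exact (this hy hx hqy hqx hyx hxy (by omega)).symm
  have hxodd := Nat.odd_iff.1 (Nat.Coprime.coprime_dvd_right hP hx).odd_of_right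
  have hyodd := Nat.odd_iff.1 (Nat.Coprime.coprime_dvd_right hP hy).odd_of_right
  have h2q : 2 * q ∣ y - x :=
    (Nat.coprime_two_left.2 hq).mul_dvd_of_dvd_of_dvd (Nat.dvd_of_mod_eq_zero (by omega))
      (Nat.dvd_sub hqy hqx)
  have := Nat.eq_zero_of_dvd_of_lt h2q (by omega)
  omega

section Sieve

variable {P q r i a : ℕ} {s : List ℕ}

theorem occursAt_prime_mul_iff_of_forall (hq : q.Prime) (hs : ∀ x ∈ s, 0 < x)
    (h : ∀ x, r ≤ x → x ≤ r + s.sum → x.Coprime P → ¬ q ∣ x) :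
    OccursAt (q * P) r s ↔ OccursAt P r s := by
  rw [occursAt_iff hs, occursAt_iff hs]
  refine forall_congr' fun x => imp_congr_right fun h1 => imp_congr_right fun h2 => ?_
  rw [coprime_prime_mul_iff hq, and_iff_left_of_imp (h x h1 h2)]

theorem occursAt_prime_mul_iff_splitGap (hq : q.Prime) (hq2 : Odd q) (hP : 2 ∣ P)
    (hs : ∀ x ∈ s, 0 < x) (hsum : s.sum < 2 * q) (hi : i < s.length) (ha0 : 0 < a)
    (ha : a < s.getD i 0) (hm : (r + (s.take i).sum + a).Coprime P)
    (hqm : q ∣ r + (s.take i).sum + a) :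
    OccursAt (q * P) r s ↔ OccursAt P r (splitGap s i a) := by
  have hmle : (s.take i).sum + a ≤ s.sum := by
    have := List.sum_take_succ s i hi
    have := sum_take_le_sum s (i + 1)
    rw [List.getD_eq_getElem _ _ hi] at ha
    omega
  rw [occursAt_iff hs, occursAt_iff (pos_of_mem_splitGap hs ha0 ha), sum_splitGap hi ha.le]
  refine forall_congr' fun x => imp_congr_right fun h1 => imp_congr_right fun h2 => ?_
  rw [coprime_prime_mul_iff hq, mem_gapPoints_splitGap hi ha.le]
  by_cases hx : x = r + (s.take i).sum + a
  · subst hx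
    simp only [hqm, not_true_eq_false, and_false, notMem_gapPoints hi ha0 ha, iff_true_intro hm,
      or_true]
  · have hxq : x.Coprime P → ¬ q ∣ x := fun hxP hqx =>
      hx (eq_of_dvd_of_coprime_of_lt hP hq2 hxP hm hqx hqm (by omega) (by omega))
    rw [and_iff_left_of_imp hxq, or_iff_left hx]

theorem occursAt_or_exists_refinement_of_occursAt_prime_mul (hq : q.Prime) (hq2 : Odd q)
    (hP : 2 ∣ P) (hs : ∀ x ∈ s, 0 < x) (hsum : s.sum < 2 * q) (h : OccursAt (q * P) r s) :
    OccursAt P r s ∨ ∃ t ∈ refinements s, OccursAt P r t := by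
  by_cases hmult : ∃ m, r ≤ m ∧ m ≤ r + s.sum ∧ m.Coprime P ∧ q ∣ m
  · right
    obtain ⟨m, hm1, hm2, hmP, hqm⟩ := hmult
    have hmpts : m ∉ gapPoints r s := fun hmem =>
      ((coprime_prime_mul_iff hq).1 (h.coprime_of_mem hs hmem)).2 hqm
    have hrm : r < m := lt_of_le_of_ne hm1 fun h => hmpts (h ▸ self_mem_gapPoints)
    obtain ⟨i, hi, hlo, hhi⟩ := exists_sum_take_lt_le s (d := m - r) (by omega) (by omega)
    have hsucc := List.sum_take_succ s i hi
    have hne : m ≠ r + (s.take (i + 1)).sum := fun he => hmpts ⟨i + 1, hi, he⟩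
    have hmeq : m = r + (s.take i).sum + (m - r - (s.take i).sum) := by omega
    refine ⟨_, mem_refinements.2 ⟨i, hi, m - r - (s.take i).sum, by omega, ?_, rfl⟩, ?_⟩
    · rw [List.getD_eq_getElem _ _ hi]
      omega
    · rw [hmeq] at hmP hqm
      refine (occursAt_prime_mul_iff_splitGap hq hq2 hP hs hsum hi (by omega) ?_ hmP hqm).1 h
      rw [List.getD_eq_getElem _ _ hi]
      omega
  · push Not at hmult
    exact Or.inl ((occursAt_prime_mul_iff_of_forall hq hs hmult).1 h)

theorem occursAt_prime_mul_iff_of_occursAt (hq : q.Prime) (hs : ∀ x ∈ s, 0 < x)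
    (h : OccursAt P r s) :
    OccursAt (q * P) r s ↔ ∀ i ≤ s.length, ¬ q ∣ r + (s.take i).sum := by
  refine ⟨fun hqP i hi =>
      ((coprime_prime_mul_iff hq).1 (hqP.coprime_of_mem hs ⟨i, hi, rfl⟩)).2,
    fun hnd => (occursAt_prime_mul_iff_of_forall hq hs fun x h1 h2 hx => ?_).2 h⟩
  obtain ⟨i, hi, rfl⟩ := ((occursAt_iff hs).1 h x h1 h2).1 hx
  exact hnd i hi

theorem occursAt_prime_mul_iff_of_occursAt_splitGap (hq : q.Prime) (hq2 : Odd q) (hP : 2 ∣ P)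
    (hs : ∀ x ∈ s, 0 < x) (hsum : s.sum < 2 * q) (hi : i < s.length) (ha0 : 0 < a)
    (ha : a < s.getD i 0) (ht : OccursAt P r (splitGap s i a)) :
    OccursAt (q * P) r s ↔ q ∣ r + (s.take i).sum + a := by
  have hm : (r + (s.take i).sum + a).Coprime P :=
    ht.coprime_of_mem (pos_of_mem_splitGap hs ha0 ha)
      ((mem_gapPoints_splitGap hi ha.le).2 (Or.inr rfl))
  refine ⟨fun h => ?_, fun hqm =>
    (occursAt_prime_mul_iff_splitGap hq hq2 hP hs hsum hi ha0 ha hm hqm).2 ht⟩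
  by_contra hqm
  refine notMem_gapPoints hi ha0 ha ((occursAt_iff hs).1 h _ ?_ ?_ |>.1
    ((coprime_prime_mul_iff hq).2 ⟨hm, hqm⟩))
  · omega
  · have := sum_splitGap hi ha.le ▸ bounds_of_mem_gapPoints
      ((mem_gapPoints_splitGap (r := r) hi ha.le).2 (Or.inr rfl))
    omega

theorem not_occursAt_splitGap (hs : ∀ x ∈ s, 0 < x) (h : OccursAt P r s) (hi : i < s.length)
    (ha0 : 0 < a) (ha : a < s.getD i 0) : ¬ OccursAt P r (splitGap s i a) := fun ht =>
  have hmem : r + (s.take i).sum + a ∈ gapPoints r (splitGap s i a) :=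
    (mem_gapPoints_splitGap hi ha.le).2 (Or.inr rfl)
  have hbounds := sum_splitGap hi ha.le ▸ bounds_of_mem_gapPoints hmem
  notMem_gapPoints hi ha0 ha (((occursAt_iff hs).1 h _ hbounds.1 hbounds.2).1
    (ht.coprime_of_mem (pos_of_mem_splitGap hs ha0 ha) hmem))

end Sieve

section ResidueCounting

variable {P q : ℕ}

theorem card_filter_range_dvd_add_mul (hq : q.Prime) (hqP : ¬ q ∣ P) (n : ℕ) :
    #{k ∈ range q | q ∣ n + k * P} = 1 := by
  have := Fact.mk hq
  have hP : (P : ZMod q) ≠ 0 := by rwa [Ne, ZMod.natCast_eq_zero_iff]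
  rw [card_eq_one]
  refine ⟨(-(n : ZMod q) * (P : ZMod q)⁻¹).val, ?_⟩
  ext k
  simp only [mem_filter, mem_range, mem_singleton, ← ZMod.natCast_eq_zero_iff, Nat.cast_add,
    Nat.cast_mul]
  constructor
  · rintro ⟨hk, hdvd⟩
    rw [← ZMod.val_natCast_of_lt hk]
    congr 1
    rw [eq_mul_inv_iff_mul_eq₀ hP]
    exact (neg_eq_of_add_eq_zero_right hdvd).symm
  · rintro rfl
    refine ⟨ZMod.val_lt _, ?_⟩
    rw [ZMod.natCast_zmod_val, mul_assoc, inv_mul_cancel₀ hP]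
    ring

theorem card_filter_range_forall_not_dvd {ι : Type*} (hq : q.Prime) (hqP : ¬ q ∣ P)
    (I : Finset ι) (n : ι → ℕ)
    (hn : ∀ i ∈ I, ∀ j ∈ I, ∀ k, q ∣ n i + k * P → q ∣ n j + k * P → i = j) :
    #{k ∈ range q | ∀ i ∈ I, ¬ q ∣ n i + k * P} = q - #I := by
  have hbad : #{k ∈ range q | ∃ i ∈ I, q ∣ n i + k * P} = #I := by
    have hunion : {k ∈ range q | ∃ i ∈ I, q ∣ n i + k * P} =
        I.biUnion fun i => {k ∈ range q | q ∣ n i + k * P} := by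
      ext k
      simp only [mem_filter, mem_biUnion]
      tauto
    rw [hunion, card_biUnion, sum_congr rfl fun i _ => card_filter_range_dvd_add_mul hq hqP (n i),
      sum_const, smul_eq_mul, mul_one]
    intro i hi j hj hij
    simp only [Function.onFun, disjoint_left, mem_filter]
    exact fun k hki hkj => hij (hn i hi j hj k hki.2 hkj.2)
  have hsplit :=
    card_filter_add_card_filter_not (s := range q) (fun k => ∃ i ∈ I, q ∣ n i + k * P)
  simp only [not_exists, not_and, card_range] at hsplit
  omega

end ResidueCounting

section Lifts

open scoped Classical

variable {P q r : ℕ} {s : List ℕ}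

theorem card_refinements_occursAt_of_occursAt (hs : ∀ x ∈ s, 0 < x) (h : OccursAt P r s) :
    #{t ∈ refinements s | OccursAt P r t} = 0 := by
  rw [card_eq_zero, filter_eq_empty_iff]
  intro t ht
  obtain ⟨i, hi, a, ha0, ha, rfl⟩ := mem_refinements.1 ht
  exact not_occursAt_splitGap hs h hi ha0 ha

theorem card_refinements_occursAt_of_mem {t : List ℕ} (ht : t ∈ refinements s)
    (h : OccursAt P r t) : #{t ∈ refinements s | OccursAt P r t} = 1 := by
  have hlen : ∀ t ∈ refinements s, t.length = s.length + 1 := fun t ht => by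
    obtain ⟨i, hi, a, -, -, rfl⟩ := mem_refinements.1 ht
    exact length_splitGap hi
  refine card_eq_one.2
    ⟨t, eq_singleton_iff_unique_mem.2 ⟨mem_filter.2 ⟨ht, h⟩, fun t' ht' => ?_⟩⟩
  obtain ⟨ht', h'⟩ := mem_filter.1 ht'
  exact h'.2.eq_of_length_eq h.2 (by rw [hlen t' ht', hlen t ht])

theorem card_lifts_of_occursAt (hq : q.Prime) (hq2 : Odd q) (hP : 2 ∣ P) (hqP : ¬ q ∣ P)
    (hs : ∀ x ∈ s, 0 < x) (hsum : s.sum < 2 * q) (h : OccursAt P r s) :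
    #{k ∈ range q | OccursAt (q * P) (r + k * P) s} = q - (s.length + 1) := by
  have hiff : ∀ k, OccursAt (q * P) (r + k * P) s ↔
      ∀ i ∈ range (s.length + 1), ¬ q ∣ (r + (s.take i).sum) + k * P := fun k => by
    rw [occursAt_prime_mul_iff_of_occursAt hq hs (occursAt_add_mul_iff.2 h)]
    simp only [mem_range, Nat.lt_succ_iff, add_right_comm r]
  rw [filter_congr fun k _ => hiff k, card_filter_range_forall_not_dvd hq hqP, card_range]
  intro i hi j hj k hki hkj
  simp only [mem_range, Nat.lt_succ_iff] at hi hj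
  have hcop : ∀ i ≤ s.length, (r + (s.take i).sum + k * P).Coprime P := fun i hi =>
    (Nat.coprime_add_mul_right_left _ _ _).2 (h.coprime_of_mem hs ⟨i, hi, rfl⟩)
  have hi' := sum_take_le_sum s i
  have hj' := sum_take_le_sum s j
  have heq := eq_of_dvd_of_coprime_of_lt hP hq2 (hcop i hi) (hcop j hj) hki hkj (by omega)
    (by omega)
  exact sum_take_injOn hs (Set.mem_Iic.2 hi) (Set.mem_Iic.2 hj) (by simp only; omega)

theorem card_lifts_of_occursAt_splitGap (hq : q.Prime) (hq2 : Odd q) (hP : 2 ∣ P)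
    (hqP : ¬ q ∣ P) (hs : ∀ x ∈ s, 0 < x) (hsum : s.sum < 2 * q) {i a : ℕ}
    (hi : i < s.length) (ha0 : 0 < a) (ha : a < s.getD i 0)
    (ht : OccursAt P r (splitGap s i a)) :
    #{k ∈ range q | OccursAt (q * P) (r + k * P) s} = 1 := by
  have hiff : ∀ k, OccursAt (q * P) (r + k * P) s ↔ q ∣ (r + (s.take i).sum + a) + k * P :=
    fun k => by
      rw [occursAt_prime_mul_iff_of_occursAt_splitGap hq hq2 hP hs hsum hi ha0 ha
        (occursAt_add_mul_iff.2 ht), add_right_comm r, add_right_comm _ (k * P)]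
  rw [filter_congr fun k _ => hiff k, card_filter_range_dvd_add_mul hq hqP]

theorem card_lifts_eq (hq : q.Prime) (hq2 : Odd q) (hP : 2 ∣ P) (hqP : ¬ q ∣ P)
    (hs : ∀ x ∈ s, 0 < x) (hsum : s.sum < 2 * q) (r : ℕ) :
    #{k ∈ range q | OccursAt (q * P) (r + k * P) s} =
      (if OccursAt P r s then q - (s.length + 1) else 0) +
        #{t ∈ refinements s | OccursAt P r t} := by
  by_cases h : OccursAt P r s
  · rw [if_pos h, card_lifts_of_occursAt hq hq2 hP hqP hs hsum h,
      card_refinements_occursAt_of_occursAt hs h, add_zero]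
  rw [if_neg h, zero_add]
  by_cases ht : ∃ t ∈ refinements s, OccursAt P r t
  · obtain ⟨t, ht, htr⟩ := ht
    rw [card_refinements_occursAt_of_mem ht htr]
    obtain ⟨i, hi, a, ha0, ha, rfl⟩ := mem_refinements.1 ht
    exact card_lifts_of_occursAt_splitGap hq hq2 hP hqP hs hsum hi ha0 ha htr
  · rw [card_eq_zero.2 (filter_eq_empty_iff.2 fun t ht' htr => ht ⟨t, ht', htr⟩),
      card_eq_zero, filter_eq_empty_iff]
    intro k _ hk
    rcases occursAt_or_exists_refinement_of_occursAt_prime_mul hq hq2 hP hs hsum hk with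
      hk | ⟨t, ht', hk⟩
    · exact h (occursAt_add_mul_iff.1 hk)
    · exact ht ⟨t, ht', occursAt_add_mul_iff.1 hk⟩

end Lifts

theorem Icc_mul_eq_image {P : ℕ} (hP : 0 < P) (q : ℕ) :
    Icc 1 (q * P) = (Icc 1 P ×ˢ range q).image fun x => x.1 + x.2 * P := by
  ext r
  simp only [mem_Icc, mem_image, mem_product, mem_range, Prod.exists]
  constructor
  · rintro ⟨h1, h2⟩
    have hmod := Nat.mod_lt (r - 1) hP
    have hdiv := Nat.mod_add_div' (r - 1) P
    refine ⟨(r - 1) % P + 1, (r - 1) / P, ⟨⟨by omega, by omega⟩, ?_⟩, by omega⟩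
    exact (Nat.div_lt_iff_lt_mul hP).2 (by omega)
  · rintro ⟨a, k, ⟨⟨ha1, ha2⟩, hk⟩, rfl⟩
    have := Nat.mul_le_mul_right P (show k + 1 ≤ q by omega)
    rw [add_one_mul] at this
    omega

theorem injOn_fst_add_snd_mul {P : ℕ} (q : ℕ) :
    Set.InjOn (fun x : ℕ × ℕ => x.1 + x.2 * P) ↑(Icc 1 P ×ˢ range q) := by
  intro x hx y hy hxy
  simp only [coe_product, coe_Icc, coe_range, Set.mem_prod, Set.mem_Icc, Set.mem_Iio] at hx hy hxy
  have key : ∀ u v : ℕ × ℕ, u.1 ≤ P → 1 ≤ v.1 → u.2 < v.2 →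
      v.1 + v.2 * P ≠ u.1 + u.2 * P :=
    fun u v hu hv huv => by
      have := Nat.mul_le_mul_right P (show u.2 + 1 ≤ v.2 from huv)
      rw [add_one_mul] at this
      omega
  have h2 : x.2 = y.2 := by
    by_contra hne
    rcases Nat.lt_or_gt_of_ne hne with hlt | hlt
    · exact key x y hx.1.2 hy.1.1 hlt hxy.symm
    · exact key y x hy.1.2 hx.1.1 hlt hxy
  exact Prod.ext (by rw [h2] at hxy; omega) h2

theorem card_filter_Icc_mul {P : ℕ} (hP : 0 < P) (q : ℕ) (f : ℕ → Prop) [DecidablePred f] :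
    #{r ∈ Icc 1 (q * P) | f r} = ∑ r ∈ Icc 1 P, #{k ∈ range q | f (r + k * P)} := by
  simp only [card_filter]
  rw [Icc_mul_eq_image hP, sum_image (injOn_fst_add_snd_mul q), sum_product]

theorem primorial_eq_mul_of_next_prime {p p' : ℕ} (hp' : p'.Prime) (hlt : p < p')
    (hmin : ∀ q : ℕ, q.Prime → p < q → p' ≤ q) : primorial p' = p' * primorial p := by
  obtain ⟨d, rfl⟩ : ∃ d, p' = p + d := ⟨p' - p, by omega⟩
  have hprimes : {q ∈ Ico (p + 1) (p + d + 1) | q.Prime} = {p + d} := by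
    ext q
    simp only [mem_filter, mem_Ico, mem_singleton]
    refine ⟨fun ⟨⟨_, h2⟩, hq⟩ => ?_, fun h => ⟨⟨by omega, by omega⟩, h ▸ hp'⟩⟩
    have := hmin q hq (by omega)
    omega
  rw [primorial_add, hprimes, prod_singleton, mul_comm]

theorem Ncount_eq_card_occursAt (p : ℕ) (s : List ℕ) :
    open scoped Classical in
    Ncount p s = #{r ∈ Icc 1 (primorial p) | OccursAt (primorial p) r s} := by
  unfold Ncount OccursAt
  congr

theorem count_recurrence_general (p p' : ℕ) (hp : p.Prime) (hp' : p'.Prime) (hlt : p < p')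
    (hmin : ∀ q : ℕ, q.Prime → p < q → p' ≤ q)
    (s : List ℕ) (j : ℕ) (hlen : s.length = j) (hpos : ∀ c ∈ s, 0 < c)
    (hsum : s.sum < 2 * p') :
    Ncount p' s = (p' - (j + 1)) * Ncount p s + ∑ t ∈ refinements s, Ncount p t := by
  classical
  subst hlen
  have hP : 2 ∣ primorial p := Nat.prime_two.dvd_primorial_iff.2 hp.two_le
  have hqP : ¬ p' ∣ primorial p := fun h => by
    have := hp'.dvd_primorial_iff.1 h
    omega
  have hq2 : Odd p' := hp'.odd_of_ne_two (by have := hp.two_le; omega)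
  simp only [Ncount_eq_card_occursAt]
  rw [primorial_eq_mul_of_next_prime hp' hlt hmin, card_filter_Icc_mul (primorial_pos p),
    sum_congr rfl fun r _ => card_lifts_eq hp' hq2 hP hqP hpos hsum r, sum_add_distrib,
    ← sum_filter, sum_const, smul_eq_mul, mul_comm]
  congr 1
  exact sum_card_bipartiteAbove_eq_sum_card_bipartiteBelow fun r t => OccursAt (primorial p) r t

theorem count_recurrence (p p' : ℕ) (hp : p.Prime) (hp' : p'.Prime) (hlt : p < p')
    (hmin : ∀ q : ℕ, q.Prime → p < q → p' ≤ q)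
    (s : List ℕ) (j : ℕ) (hlen : s.length = j) (hpos : ∀ c ∈ s, 0 < c)
    (hj : j < p' - 1) (hsum : s.sum < 2 * p') :
    Ncount p' s = (p' - (j + 1)) * Ncount p s + ∑ t ∈ refinements s, Ncount p t :=
  count_recurrence_general p p' hp hp' hlt hmin s j hlen hpos hsum
end

section
/- For every prime p ≥ 3, the number of gaps equal to 2 in the cycle of gaps 𝒢(p#) equals ∏_{q odd prime, q ≤ p} (q - 2); equivalently, the number of integers r with 1 ≤ r ≤ p# such that both r and r + 2 are coprime to p# equals ∏_{q odd prime, q ≤ p} (q - 2). -/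
open Finset

/-! Since `p#` is even and a totative `r` is odd, `r + 1` is never a totative, so a gap `2` starts
at `r` exactly when `r` and `r + 2` are both totatives. Counting residues `x` with `x` and `x + k`
both units is multiplicative in the modulus by the Chinese remainder theorem, and modulo a prime `q`
it excludes the residues `0` and `-k`, which coincide exactly when `q ∣ k`. For `k = 2` the prime
`2` contributes `1` and every odd prime `q` contributes `q - 2`. -/

open ArithmeticFunction

lemma card_filter_Icc_eq_card_filter_zmod (n : ℕ) [NeZero n] (P : ZMod n → Prop)
    [DecidablePred P] : #((Icc 1 n).filter fun r : ℕ => P r) = #{x : ZMod n | P x} := by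
  have hperiodic : Function.Periodic (fun r : ℕ => P r) n := fun r => by simp
  rw [← Ico_add_one_right_eq_Icc, add_comm,
    Nat.filter_Ico_card_eq_of_periodic _ _ _ hperiodic, Nat.count_eq_card_filter_range]
  refine card_bij' (fun r _ => (r : ZMod n)) (fun x _ => x.val) ?_ ?_ ?_ ?_
  · intro r hr; simpa using (mem_filter.mp hr).2
  · intro x hx; simpa [ZMod.val_lt] using hx
  · intro r hr; exact ZMod.val_cast_of_lt (mem_range.mp (mem_filter.mp hr).1)
  · intro x _; exact ZMod.natCast_zmod_val x

def totativePairCount (k : ℕ) : ArithmeticFunction ℕ :=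
  ⟨fun n => #{r ∈ Icc 1 n | r.Coprime n ∧ (r + k).Coprime n}, rfl⟩

lemma totativePairCount_apply (k n : ℕ) :
    totativePairCount k n = #{r ∈ Icc 1 n | r.Coprime n ∧ (r + k).Coprime n} :=
  rfl

lemma totativePairCount_eq_natCard_zmod (k n : ℕ) [NeZero n] :
    totativePairCount k n = Nat.card {x : ZMod n // IsUnit x ∧ IsUnit (x + k)} := by
  rw [Nat.card_eq_fintype_card, Fintype.card_subtype, ← card_filter_Icc_eq_card_filter_zmod]
  simp only [← Nat.cast_add, ZMod.isUnit_iff_coprime, totativePairCount_apply]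

lemma natCard_isUnit_and_isUnit_add_prod (R S : Type*) [Semiring R] [Semiring S] (k : ℕ) :
    Nat.card {x : R × S // IsUnit x ∧ IsUnit (x + k)} =
      Nat.card {x : R // IsUnit x ∧ IsUnit (x + k)} *
        Nat.card {y : S // IsUnit y ∧ IsUnit (y + k)} := by
  rw [← Nat.card_prod]
  refine Nat.card_congr ((Equiv.subtypeEquivRight fun x => ?_).trans (Equiv.subtypeProdEquivProd))
  simp only [Prod.isUnit_iff, Prod.fst_add, Prod.snd_add, Prod.fst_natCast, Prod.snd_natCast]
  tauto

lemma natCard_isUnit_and_isUnit_add_congr {R S : Type*} [Semiring R] [Semiring S] (e : R ≃+* S)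
    (k : ℕ) :
    Nat.card {x : R // IsUnit x ∧ IsUnit (x + k)} =
      Nat.card {y : S // IsUnit y ∧ IsUnit (y + k)} :=
  Nat.card_congr <| e.toEquiv.subtypeEquiv fun x => by
    simp only [RingEquiv.toEquiv_eq_coe, EquivLike.coe_coe, ← map_natCast e k, ← map_add,
      isUnit_map_iff]

lemma isMultiplicative_totativePairCount (k : ℕ) : (totativePairCount k).IsMultiplicative := by
  refine IsMultiplicative.iff_ne_zero.2
    ⟨by simp [totativePairCount_apply], fun {m n} hm hn hmn => ?_⟩
  have : NeZero m := ⟨hm⟩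
  have : NeZero n := ⟨hn⟩
  have : NeZero (m * n) := ⟨mul_ne_zero hm hn⟩
  rw [totativePairCount_eq_natCard_zmod, totativePairCount_eq_natCard_zmod,
    totativePairCount_eq_natCard_zmod,
    natCard_isUnit_and_isUnit_add_congr (ZMod.chineseRemainder hmn),
    natCard_isUnit_and_isUnit_add_prod]

lemma totativePairCount_prime (k : ℕ) {q : ℕ} (hq : q.Prime) :
    totativePairCount k q = if q ∣ k then q - 1 else q - 2 := by
  have : Fact q.Prime := ⟨hq⟩
  have hunits (x : ZMod q) :
      IsUnit x ∧ IsUnit (x + k) ↔ x ∈ ({0, -(k : ZMod q)} : Finset _)ᶜ := by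
    simp [isUnit_iff_ne_zero, eq_neg_iff_add_eq_zero]
  rw [totativePairCount_eq_natCard_zmod, Nat.card_eq_fintype_card, Fintype.card_subtype,
    filter_congr fun x _ => hunits x, filter_mem_eq_inter, univ_inter, card_compl, ZMod.card]
  split_ifs with hdvd
  · rw [(ZMod.natCast_eq_zero_iff k q).2 hdvd, neg_zero, pair_eq_singleton, card_singleton]
  · rw [card_pair]
    rwa [ne_eq, zero_eq_neg, ZMod.natCast_eq_zero_iff]

lemma matchesGaps_two_iff {P r : ℕ} (hP : 2 ∣ P) (hr : r.Coprime P) :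
    MatchesGaps P r [2] ↔ (r + 2).Coprime P := by
  have hr_odd : ¬ 2 ∣ r := fun h2 => Nat.not_coprime_of_dvd_of_dvd one_lt_two h2 hP hr
  have hskip : ¬ (r + 1).Coprime P :=
    Nat.not_coprime_of_dvd_of_dvd one_lt_two (by omega) hP
  simp only [MatchesGaps, IsNextTot, and_true]
  refine ⟨fun h => h.2.1, fun h => ⟨by omega, h, fun x hx hx' => ?_⟩⟩
  rwa [show x = r + 1 by omega]

lemma prod_primes_totativePairCount_two (n : ℕ) :
    ∏ q ∈ (range (n + 1)).filter Nat.Prime, totativePairCount 2 q =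
      ∏ q ∈ (range (n + 1)).filter (fun q => q.Prime ∧ Odd q), (q - 2) := by
  rw [← filter_filter, prod_filter Odd]
  refine prod_congr rfl fun q hq => ?_
  have hq : q.Prime := (mem_filter.mp hq).2
  rw [totativePairCount_prime 2 hq]
  rcases hq.eq_two_or_odd' with rfl | hodd
  · simp
  · have hndvd : ¬ q ∣ 2 :=
      (Nat.prime_dvd_prime_iff_eq hq Nat.prime_two).not.2 (hodd.ne_two_of_dvd_nat dvd_rfl)
    simp [hodd, hndvd]

open scoped Classical in
theorem gap_two_count_general (p : ℕ) (h3 : 3 ≤ p) :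
    Ncount p [2] = ∏ q ∈ (Finset.range (p + 1)).filter (fun q => q.Prime ∧ Odd q), (q - 2) ∧
    ((Finset.Icc 1 (primorial p)).filter
        (fun r => Nat.Coprime r (primorial p) ∧ Nat.Coprime (r + 2) (primorial p))).card =
      ∏ q ∈ (Finset.range (p + 1)).filter (fun q => q.Prime ∧ Odd q), (q - 2) := by
  have htwins :
      #{r ∈ Icc 1 (primorial p) | r.Coprime (primorial p) ∧ (r + 2).Coprime (primorial p)} =
        ∏ q ∈ (range (p + 1)).filter (fun q => q.Prime ∧ Odd q), (q - 2) := by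
    rw [← totativePairCount_apply, primorial,
      (isMultiplicative_totativePairCount 2).map_prod_of_prime _ fun q hq => (mem_filter.mp hq).2,
      prod_primes_totativePairCount_two]
  have h2 : 2 ∣ primorial p :=
    dvd_prod_of_mem _ (mem_filter.mpr ⟨mem_range.mpr (by omega), Nat.prime_two⟩)
  refine ⟨?_, htwins⟩
  rw [Ncount, ← htwins]
  exact congrArg card (filter_congr fun r _ => and_congr_right (matchesGaps_two_iff h2))

open scoped Classical in
theorem gap_two_count (p : ℕ) (hp : p.Prime) (h3 : 3 ≤ p) :
    Ncount p [2] = ∏ q ∈ (Finset.range (p + 1)).filter (fun q => q.Prime ∧ Odd q), (q - 2) ∧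
    ((Finset.Icc 1 (primorial p)).filter
        (fun r => Nat.Coprime r (primorial p) ∧ Nat.Coprime (r + 2) (primorial p))).card =
      ∏ q ∈ (Finset.range (p + 1)).filter (fun q => q.Prime ∧ Odd q), (q - 2) :=
  gap_two_count_general p h3
end

section
/- For every prime p ≥ 3, the number of gaps equal to 4 in the cycle of gaps 𝒢(p#) equals the number of gaps equal to 2 in 𝒢(p#): N_p(4) = N_p(2). -/
/-
A gap 2 (resp. 4) after a totative `r` of `p#` is the same as `r + 2` (resp. `r + 4`) being a
totative: the numbers in between are all divisible by 2 or 3. Reducing mod `p#`, both counts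
become `#{x | x and x + a are units}` in `ZMod p#`, with `a = 2` and `a = 4`. This count is
unchanged when `a` is multiplied by a unit, and since `p# = 2k` with `k` odd, `k + 2` is a unit
with `(k + 2) * 2 = 4`.
-/

open Finset

instance instNeZeroPrimorial (n : ℕ) : NeZero (primorial n) := ⟨primorial_ne_zero n⟩

theorem not_coprime_of_dvd {d x n : ℕ} (hd : d ≠ 1) (hdx : d ∣ x) (hdn : d ∣ n) :
    ¬ x.Coprime n :=
  fun h => hd (Nat.eq_one_of_dvd_coprimes h hdx hdn)

theorem isNextTot_add_two_iff {n r : ℕ} (h2 : 2 ∣ n) (hr : r.Coprime n) :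
    IsNextTot n r (r + 2) ↔ (r + 2).Coprime n := by
  have hr2 : ¬ 2 ∣ r := fun h => not_coprime_of_dvd (by norm_num) h h2 hr
  refine ⟨fun h => h.2.1, fun h => ⟨by omega, h, fun x hx hx' => ?_⟩⟩
  exact not_coprime_of_dvd (by norm_num) (by omega) h2

theorem isNextTot_add_four_iff {n r : ℕ} (h2 : 2 ∣ n) (h3 : 3 ∣ n) (hr : r.Coprime n) :
    IsNextTot n r (r + 4) ↔ (r + 4).Coprime n := by
  have hr2 : ¬ 2 ∣ r := fun h => not_coprime_of_dvd (by norm_num) h h2 hr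
  have hr3 : ¬ 3 ∣ r := fun h => not_coprime_of_dvd (by norm_num) h h3 hr
  refine ⟨fun h => h.2.1, fun h => ⟨by omega, h, fun x hx hx' => ?_⟩⟩
  have hr43 : ¬ 3 ∣ r + 4 := fun h' => not_coprime_of_dvd (by norm_num) h' h3 h
  obtain rfl | rfl | rfl : x = r + 1 ∨ x = r + 2 ∨ x = r + 3 := by omega
  · exact not_coprime_of_dvd (by norm_num) (by omega : 2 ∣ r + 1) h2
  · exact not_coprime_of_dvd (by norm_num) (by grind : 3 ∣ r + 2) h3
  · exact not_coprime_of_dvd (by norm_num) (by omega : 2 ∣ r + 3) h2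

theorem card_filter_Icc_natCast_eq {n : ℕ} [NeZero n] (Q : ZMod n → Prop) [DecidablePred Q] :
    #{r ∈ Icc 1 n | Q (r : ℕ)} = #{x : ZMod n | Q x} := by
  have hcast (x : ZMod n) : (((x - 1).val + 1 : ℕ) : ZMod n) = x := by
    simp only [Nat.cast_add, ZMod.natCast_zmod_val, Nat.cast_one, sub_add_cancel]
  refine card_nbij' (fun r => (r : ZMod n)) (fun x => (x - 1).val + 1) ?_ ?_ ?_ fun x _ => hcast x
  · intro r hr
    simp_all
  · intro x hx
    simp only [coe_filter, mem_Icc, mem_univ, true_and, Set.mem_ofPred_eq, hcast] at hx ⊢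
    exact ⟨⟨Nat.le_add_left 1 _, ZMod.val_lt (x - 1)⟩, hx⟩
  · intro r hr
    simp only [coe_filter, mem_Icc, Set.mem_ofPred_eq] at hr
    dsimp only
    rw [← Nat.cast_one, ← Nat.cast_sub hr.1.1, ZMod.val_natCast, Nat.mod_eq_of_lt (by omega),
      Nat.sub_add_cancel hr.1.1]

theorem ncount_singleton_eq_card_zmod {p g : ℕ}
    (h : ∀ r, r.Coprime (primorial p) →
      (IsNextTot (primorial p) r (r + g) ↔ (r + g).Coprime (primorial p))) :
    Ncount p [g] = #{x : ZMod (primorial p) | IsUnit x ∧ IsUnit (x + g)} := by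
  classical
  rw [Ncount, ← card_filter_Icc_natCast_eq]
  congr 1
  refine filter_congr fun r _ => ?_
  simp only [MatchesGaps, and_true, ZMod.isUnit_iff_coprime, ← Nat.cast_add]
  exact and_congr_right (h r)

theorem card_filter_isUnit_add_units_mul {R : Type*} [CommRing R] [Fintype R]
    [DecidablePred (IsUnit : R → Prop)] (u : Rˣ) (a : R) :
    #{x : R | IsUnit x ∧ IsUnit (x + u * a)} = #{x : R | IsUnit x ∧ IsUnit (x + a)} := by
  refine (card_equiv (Units.mulLeft u) fun x => ?_).symm
  simp only [mem_filter, mem_univ, true_and, Units.mulLeft_apply, ← mul_add,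
    Units.isUnit_units_mul]

theorem exists_unit_mul_two_eq_four {n : ℕ} (h2 : 2 ∣ n) (h4 : ¬ 4 ∣ n) :
    ∃ u : (ZMod n)ˣ, (u : ZMod n) * 2 = 4 := by
  obtain ⟨k, rfl⟩ := h2
  have hk : Odd k := Nat.odd_iff.mpr (by omega)
  have hcop : (k + 2).Coprime (2 * k) :=
    Nat.Coprime.mul_right (hk.add_even even_two).coprime_two_right
      (Nat.coprime_self_add_left.mpr (Nat.coprime_comm.mp hk.coprime_two_right))
  refine ⟨ZMod.unitOfCoprime (k + 2) hcop, ?_⟩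
  have hzero : ((2 * k : ℕ) : ZMod (2 * k)) = 0 := ZMod.natCast_self _
  rw [ZMod.coe_unitOfCoprime]
  push_cast at hzero ⊢
  linear_combination hzero

theorem not_four_dvd_primorial (n : ℕ) : ¬ 4 ∣ primorial n := fun h =>
  Nat.isUnit_iff.not.mpr (by norm_num) (squarefree_primorial n 2 h)

theorem gap_four_eq_gap_two_general (p : ℕ) (h3 : 3 ≤ p) :
    Ncount p [4] = Ncount p [2] := by
  have hdvd2 : 2 ∣ primorial p := Nat.prime_two.dvd_primorial_iff.mpr (by omega)
  have hdvd3 : 3 ∣ primorial p := Nat.prime_three.dvd_primorial_iff.mpr h3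
  obtain ⟨u, hu⟩ := exists_unit_mul_two_eq_four hdvd2 (not_four_dvd_primorial p)
  rw [ncount_singleton_eq_card_zmod fun r => isNextTot_add_four_iff hdvd2 hdvd3,
    ncount_singleton_eq_card_zmod fun r => isNextTot_add_two_iff hdvd2]
  simp only [Nat.cast_ofNat]
  rw [← hu]
  exact card_filter_isUnit_add_units_mul u 2

theorem gap_four_eq_gap_two (p : ℕ) (hp : p.Prime) (h3 : 3 ≤ p) :
    Ncount p [4] = Ncount p [2] :=
  gap_four_eq_gap_two_general p h3
end

section
/- Let J ≥ 1 be an integer and p > 2 a real number. Let R and L be the J×J matrices with R[i,j] = (-1)^{i+j} · C(j-1, i-1) for i ≤ j and R[i,j] = 0 for i > j, and L[i,j] = C(j-1, i-1) for i ≤ j and L[i,j] = 0 for i > j (where C denotes the binomial coefficient), and let Λ(p) be the diagonal matrix with entries 1, (p-3)/(p-2), (p-4)/(p-2), ..., (p-J-1)/(p-2). Then L · R = I and M_J(p) = R · Λ(p) · L; in particular the eigenvectors of M_J(p) do not depend on p. -/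
/-- The `J × J` system matrix `M_J(p)`: its `(1,1)` entry is `1`, its `(i,i)` entry is
`(p - i - 1)/(p - 2)` for `2 ≤ i ≤ J`, its `(i, i+1)` entry is `i/(p - 2)` for
`1 ≤ i ≤ J - 1`, and all other entries are `0` (stated here with `0`-based indices). -/
noncomputable def Mmat (J : ℕ) (p : ℝ) : Matrix (Fin J) (Fin J) ℝ :=
  Matrix.of fun i k =>
    if (k : ℕ) = (i : ℕ) + 1 then (((i : ℕ) : ℝ) + 1) / (p - 2)
    else if i = k then (if (i : ℕ) = 0 then 1 else (p - ((i : ℕ) : ℝ) - 2) / (p - 2))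
    else 0

/-- Matrix of right eigenvectors: `R[i,j] = (-1)^(i+j) C(j-1, i-1)` for `i ≤ j`
(`1`-based), i.e. `(-1)^(i+j) C(j, i)` with `0`-based indices. -/
def Rmat (J : ℕ) : Matrix (Fin J) (Fin J) ℝ :=
  Matrix.of fun i k =>
    if (i : ℕ) ≤ (k : ℕ) then (-1 : ℝ) ^ ((i : ℕ) + (k : ℕ)) * (Nat.choose k i : ℝ) else 0

/-- Matrix of left eigenvectors: `L[i,j] = C(j-1, i-1)` for `i ≤ j` (`1`-based). -/
def Lmat (J : ℕ) : Matrix (Fin J) (Fin J) ℝ :=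
  Matrix.of fun i k =>
    if (i : ℕ) ≤ (k : ℕ) then (Nat.choose k i : ℝ) else 0

/-- The diagonal matrix of eigenvalues `1, (p-3)/(p-2), (p-4)/(p-2), …, (p-J-1)/(p-2)`. -/
noncomputable def Dmat (J : ℕ) (p : ℝ) : Matrix (Fin J) (Fin J) ℝ :=
  Matrix.diagonal fun i =>
    if (i : ℕ) = 0 then 1 else (p - ((i : ℕ) : ℝ) - 2) / (p - 2)

/-!
In the monomial basis of polynomials of degree `< J`, `L` is the matrix of `f(x) ↦ f(x + 1)` and
`R` that of `f(x) ↦ f(x - 1)`, so `L * R = 1` is the binomial inversion formula, obtained by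
comparing coefficients in `x ^ k = ((x + 1) - 1) ^ k`. Since `M` is upper bidiagonal, `M * R = R * Λ`
reduces entrywise to `(i + 1) * C(k, i + 1) = (k - i) * C(k, i)`; then
`M = M * R * L = R * Λ * L`.
-/

open Finset Matrix Polynomial

theorem sum_choose_mul_neg_one_pow_mul_choose {A : Type*} [CommRing A] (i k : ℕ) :
    ∑ j ∈ range (k + 1), (j.choose i : A) * ((-1) ^ (j + k) * k.choose j) =
      if i = k then 1 else 0 := by
  have hX : (X : A[X]) ^ k =
      ∑ j ∈ range (k + 1), C ((-1 : A) ^ (j + k) * k.choose j) * (X + 1) ^ j := by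
    calc (X : A[X]) ^ k = (-1) ^ k * (-(X + 1) + 1) ^ k := by rw [← mul_pow]; ring
      _ = _ := by
        rw [add_pow, mul_sum]
        refine sum_congr rfl fun j _ => ?_
        rw [neg_pow (X + 1 : A[X]) j]
        simp only [one_pow, mul_one, map_mul, map_pow, map_neg, map_one, map_natCast]
        ring
  calc _ = ∑ j ∈ range (k + 1), (-1 : A) ^ (j + k) * k.choose j * j.choose i :=
        sum_congr rfl fun j _ => by ring
    _ = (X ^ k : A[X]).coeff i := by
        simp only [hX, finsetSum_coeff, coeff_C_mul, coeff_X_add_one_pow]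
    _ = _ := coeff_X_pow k i

theorem cast_add_one_mul_choose_succ {A : Type*} [CommRing A] (i k : ℕ) :
    ((i : A) + 1) * k.choose (i + 1) = ((k : A) - i) * k.choose i := by
  rcases le_or_gt i k with h | h
  · rw [← Nat.cast_sub h]
    exact_mod_cast by rw [mul_comm, Nat.choose_succ_right_eq, mul_comm]
  · simp [Nat.choose_eq_zero_of_lt h, Nat.choose_eq_zero_of_lt (Nat.lt_succ_of_lt h)]

theorem Fin.sum_univ_eq_sum_range_of_eq_zero {M : Type*} [AddCommMonoid M] {J : ℕ} (f : ℕ → M)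
    (k : Fin J) (hf : ∀ j : ℕ, (k : ℕ) < j → f j = 0) :
    ∑ j : Fin J, f j = ∑ j ∈ range (k + 1), f j := by
  rw [Fin.sum_univ_eq_sum_range]
  exact (sum_subset (range_subset_range.2 k.isLt) fun j _ hj => hf j (by simpa using hj)).symm

theorem Lmat_apply (J : ℕ) (i k : Fin J) : Lmat J i k = ((k : ℕ).choose i : ℝ) := by
  rw [Lmat, of_apply, ite_eq_left_iff]
  intro h
  rw [Nat.choose_eq_zero_of_lt (not_le.1 h), Nat.cast_zero]

theorem Rmat_apply (J : ℕ) (i k : Fin J) :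
    Rmat J i k = (-1) ^ ((i : ℕ) + k) * ((k : ℕ).choose i : ℝ) := by
  rw [Rmat, of_apply, ite_eq_left_iff]
  intro h
  rw [Nat.choose_eq_zero_of_lt (not_le.1 h), Nat.cast_zero, mul_zero]

theorem Lmat_mul_Rmat (J : ℕ) : Lmat J * Rmat J = 1 := by
  ext i k
  simp only [mul_apply, one_apply, Lmat_apply, Rmat_apply, ← Fin.val_inj]
  refine (Fin.sum_univ_eq_sum_range_of_eq_zero
    (fun j => (j.choose i : ℝ) * ((-1) ^ (j + k) * (k : ℕ).choose j)) k
    fun j hj => by simp [Nat.choose_eq_zero_of_lt hj]).trans ?_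
  exact sum_choose_mul_neg_one_pow_mul_choose _ _

def Umat (J : ℕ) : Matrix (Fin J) (Fin J) ℝ :=
  of fun i k => if (k : ℕ) = i + 1 then (k : ℝ) else 0

theorem Mmat_eq (J : ℕ) (p : ℝ) : Mmat J p = Dmat J p + (p - 2)⁻¹ • Umat J := by
  ext i k
  simp only [Mmat, Dmat, Umat, of_apply, Matrix.add_apply, Matrix.smul_apply, diagonal_apply,
    smul_eq_mul]
  split_ifs <;> simp_all [Fin.ext_iff, div_eq_inv_mul]

theorem Dmat_eq_diagonal (J : ℕ) {p : ℝ} (hp : p ≠ 2) :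
    Dmat J p = diagonal fun i : Fin J => 1 - ((i : ℕ) : ℝ) / (p - 2) := by
  have hp2 : p - 2 ≠ 0 := sub_ne_zero.2 hp
  unfold Dmat
  congr 1
  funext i
  split_ifs with h
  · simp [h]
  · field_simp
    ring

theorem Umat_mul_Rmat_apply (J : ℕ) (i k : Fin J) :
    (Umat J * Rmat J) i k =
      ((i : ℝ) + 1) * ((-1) ^ ((i : ℕ) + 1 + k) * ((k : ℕ).choose (i + 1) : ℝ)) := by
  calc (Umat J * Rmat J) i k
      = ∑ j ∈ range J,
          if j = i + 1 then (j : ℝ) * ((-1) ^ (j + k) * (k : ℕ).choose j) else 0 := by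
        rw [mul_apply, ← Fin.sum_univ_eq_sum_range]
        simp only [Umat, of_apply, Rmat_apply, ite_mul, zero_mul]
    _ = _ := by
        rw [sum_ite_eq']
        split_ifs with h
        · push_cast; rfl
        · rw [mem_range, not_lt] at h
          rw [Nat.choose_eq_zero_of_lt (by omega)]
          simp

theorem Mmat_mul_Rmat (J : ℕ) {p : ℝ} (hp : p ≠ 2) :
    Mmat J p * Rmat J = Rmat J * Dmat J p := by
  rw [Mmat_eq, Matrix.add_mul, Matrix.smul_mul, Dmat_eq_diagonal J hp]
  ext i k
  simp only [Matrix.add_apply, Matrix.smul_apply, smul_eq_mul, diagonal_mul, mul_diagonal,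
    Umat_mul_Rmat_apply, Rmat_apply]
  linear_combination
    (-(p - 2)⁻¹ * (-1) ^ ((i : ℕ) + k)) * cast_add_one_mul_choose_succ (A := ℝ) i k

theorem eigenstructure_general (J : ℕ) (p : ℝ) (hp : 2 < p) :
    Lmat J * Rmat J = 1 ∧ Mmat J p = Rmat J * Dmat J p * Lmat J := by
  have hRL : Rmat J * Lmat J = 1 := mul_eq_one_comm.mp (Lmat_mul_Rmat J)
  refine ⟨Lmat_mul_Rmat J, ?_⟩
  calc Mmat J p = Mmat J p * (Rmat J * Lmat J) := by rw [hRL, Matrix.mul_one]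
    _ = Rmat J * Dmat J p * Lmat J := by rw [← Matrix.mul_assoc, Mmat_mul_Rmat J hp.ne']

theorem eigenstructure (J : ℕ) (hJ : 1 ≤ J) (p : ℝ) (hp : 2 < p) :
    Lmat J * Rmat J = 1 ∧ Mmat J p = Rmat J * Dmat J p * Lmat J :=
  eigenstructure_general J p hp
end

section
/- Fix an integer J ≥ 1 and a prime p_0. As k → ∞, the ordered product M_J^k = M_J(q_k) · M_J(q_{k-1}) ··· M_J(q_1) converges entrywise to the J×J matrix whose first row consists entirely of 1's and whose remaining entries are all 0. -/
/-- `prodMat J p0 k = M_J(q_k) ⬝ M_J(q_{k-1}) ⋯ M_J(q_1)`, where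
`q_1 < q_2 < …` enumerate the primes greater than `p0`. -/
noncomputable def prodMat (J : ℕ) (p0 : ℕ) : ℕ → Matrix (Fin J) (Fin J) ℝ
  | 0 => 1
  | k + 1 => Mmat J ((Nat.nth (fun n => n.Prime ∧ p0 < n) k : ℕ) : ℝ) * prodMat J p0 k

open Filter Topology Finset Matrix

theorem tendsto_prod_Ico_one_sub_zero {t : ℕ → ℝ} {K : ℕ} (ht0 : ∀ k, 0 ≤ t k)
    (ht1 : ∀ k ≥ K, t k ≤ 1) (hsum : ¬ Summable t) :
    Tendsto (fun n => ∏ k ∈ Ico K n, (1 - t k)) atTop (𝓝 0) := by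
  have hS : Tendsto (fun n => ∑ k ∈ range n, t k - ∑ k ∈ range K, t k) atTop atTop :=
    tendsto_atTop_add_const_right _ _ ((not_summable_iff_tendsto_nat_atTop_of_nonneg ht0).1 hsum)
  refine squeeze_zero' (.of_forall fun n => prod_nonneg fun k hk => ?_) ?_
    (Real.tendsto_exp_atBot.comp (tendsto_neg_atTop_atBot.comp hS))
  · linarith [ht1 k (mem_Ico.1 hk).1]
  filter_upwards [eventually_ge_atTop K] with n hn
  calc ∏ k ∈ Ico K n, (1 - t k) ≤ ∏ k ∈ Ico K n, Real.exp (-t k) :=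
        prod_le_prod (fun k hk => by linarith [ht1 k (mem_Ico.1 hk).1])
          fun k _ => Real.one_sub_le_exp_neg _
    _ = _ := by rw [← Real.exp_sum, sum_neg_distrib, sum_Ico_eq_sub _ hn]; rfl

theorem tendsto_zero_of_relaxation {a b t : ℕ → ℝ} (ht0 : ∀ k, 0 ≤ t k)
    (ht1 : ∀ᶠ k in atTop, t k ≤ 1) (hsum : ¬ Summable t)
    (hrec : ∀ k, a (k + 1) = (1 - t k) * a k + t k * b k)
    (hb : Tendsto b atTop (𝓝 0)) : Tendsto a atTop (𝓝 0) := by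
  rw [Metric.tendsto_nhds]
  intro ε hε
  have hb' : ∀ᶠ k in atTop, |b k| < ε / 2 := by
    simpa [Real.dist_eq] using Metric.tendsto_nhds.1 hb _ (half_pos hε)
  obtain ⟨K, hK⟩ := eventually_atTop.1 (ht1.and hb')
  have hbound : ∀ n ≥ K, |a n| ≤ ε / 2 + |a K| * ∏ k ∈ Ico K n, (1 - t k) := by
    intro n hn
    induction n, hn using Nat.le_induction with
    | base => simp only [Ico_self, prod_empty, mul_one]; linarith
    | succ n hn ih =>
      obtain ⟨htn, hbn⟩ := hK n hn
      have h0 := ht0 n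
      have h1 : 0 ≤ 1 - t n := by linarith
      calc |a (n + 1)| ≤ (1 - t n) * |a n| + t n * |b n| := by
            rw [hrec]
            refine (abs_add_le _ _).trans_eq ?_
            rw [abs_mul, abs_mul, abs_of_nonneg h1, abs_of_nonneg h0]
        _ ≤ (1 - t n) * (ε / 2 + |a K| * ∏ k ∈ Ico K n, (1 - t k)) + t n * (ε / 2) := by
            gcongr
        _ = _ := by rw [prod_Ico_succ_top hn]; ring
  have hprod := (tendsto_prod_Ico_one_sub_zero ht0 (fun k hk => (hK k hk).1) hsum).const_mul |a K|
  rw [mul_zero] at hprod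
  filter_upwards [eventually_ge_atTop K, hprod.eventually_lt_const (half_pos hε)] with n hn hsmall
  rw [Real.dist_eq, sub_zero]
  linarith [hbound n hn]

section Mmat

variable {J : ℕ} {p : ℝ}

-- For `p ≠ 2` the corner entry `1` follows the diagonal pattern `1 - i / (p - 2)`.
theorem Mmat_apply (hp : p ≠ 2) (i l : Fin J) :
    Mmat J p i l = if (l : ℕ) = i + 1 then (i + 1) / (p - 2)
      else if i = l then 1 - i / (p - 2) else 0 := by
  have : p - 2 ≠ 0 := sub_ne_zero.2 hp
  simp only [Mmat, of_apply]
  split_ifs with _ _ h0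
  · rfl
  · simp [h0]
  · field_simp
    ring
  · rfl

theorem Mmat_apply_of_ne {i l : Fin J} (h : i ≠ l) (hsucc : (l : ℕ) ≠ i + 1) :
    Mmat J p i l = 0 := by
  simp [Mmat, h, hsucc]

theorem Mmat_mulVec_apply (hp : p ≠ 2) (v : Fin J → ℝ) (i : Fin J) :
    (Mmat J p *ᵥ v) i = (1 - i / (p - 2)) * v i +
      (i + 1) / (p - 2) * if h : (i : ℕ) + 1 < J then v ⟨i + 1, h⟩ else 0 := by
  have hoff : ∀ l, i ≠ l → (l : ℕ) ≠ i + 1 → Mmat J p i l * v l = 0 := fun l h hsucc => by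
    rw [Mmat_apply_of_ne h hsucc, zero_mul]
  rw [mulVec, dotProduct]
  split_ifs with h
  · rw [sum_eq_add i ⟨i + 1, h⟩ (by simp [Fin.ext_iff])
      (fun l _ hl => hoff l (Ne.symm hl.1) fun e => hl.2 (Fin.ext e)) (by simp) (by simp)]
    simp [Mmat_apply hp]
  · rw [sum_eq_single i (fun l _ hl => hoff l (Ne.symm hl) (by have := l.isLt; omega)) (by simp)]
    simp [Mmat_apply hp]

theorem sum_Mmat_apply (hp : p ≠ 2) (l : Fin J) : ∑ i, Mmat J p i l = 1 := by
  obtain ⟨_ | m, hl⟩ := l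
  · rw [sum_eq_single ⟨0, hl⟩ (fun i _ hi => Mmat_apply_of_ne hi (by simp)) (by simp)]
    simp [Mmat]
  · rw [sum_eq_add ⟨m, by omega⟩ ⟨m + 1, hl⟩ (by simp [Fin.ext_iff])
      (fun i _ hi => Mmat_apply_of_ne hi.2 fun e => hi.1 (Fin.ext (by simp at e ⊢; omega)))
      (by simp) (by simp)]
    simp [Mmat_apply hp]

theorem sum_Mmat_mulVec (hp : p ≠ 2) (v : Fin J → ℝ) :
    ∑ i, (Mmat J p *ᵥ v) i = ∑ i, v i := by
  simp only [mulVec, dotProduct]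
  rw [sum_comm]
  simp [← sum_mul, sum_Mmat_apply hp]

end Mmat

section Orbit

variable {J : ℕ} {p : ℕ → ℝ} {v : ℕ → Fin J → ℝ}

theorem sum_Mmat_orbit (hp : ∀ k, p k ≠ 2) (hv : ∀ k, v (k + 1) = Mmat J (p k) *ᵥ v k)
    (k : ℕ) : ∑ i, v k i = ∑ i, v 0 i := by
  induction k with
  | zero => rfl
  | succ k ih => rw [hv, sum_Mmat_mulVec (hp k), ih]

theorem tendsto_Mmat_orbit_apply_of_ne_zero (hp2 : ∀ k, 2 < p k) (hp : Tendsto p atTop atTop)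
    (hdiv : ¬ Summable fun k => (p k - 2)⁻¹) (hv : ∀ k, v (k + 1) = Mmat J (p k) *ᵥ v k)
    (i : Fin J) (hi : (i : ℕ) ≠ 0) : Tendsto (fun k => v k i) atTop (𝓝 0) := by
  induction i using WellFoundedGT.induction with
  | _ i ih =>
  set b := fun k => if h : (i : ℕ) + 1 < J then v k ⟨i + 1, h⟩ else 0
  have hb : Tendsto b atTop (𝓝 0) := by
    by_cases h : (i : ℕ) + 1 < J
    · simpa only [b, dif_pos h] using ih ⟨i + 1, h⟩ (Fin.lt_def.2 (by simp)) (by simp)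
    · simpa only [b, dif_neg h] using tendsto_const_nhds
  have hi' : (0 : ℝ) < i := by exact_mod_cast Nat.pos_of_ne_zero hi
  refine tendsto_zero_of_relaxation (t := fun k => i / (p k - 2))
    (b := fun k => ((i : ℝ) + 1) / i * b k)
    (fun k => div_nonneg hi'.le (sub_nonneg.2 (hp2 k).le)) ?_ ?_ (fun k => ?_)
    (by simpa using hb.const_mul (((i : ℝ) + 1) / i))
  · filter_upwards [hp.eventually_ge_atTop (i + 2)] with k hk
    rw [div_le_one (by linarith [hp2 k])]
    linarith
  · simp_rw [div_eq_mul_inv]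
    rwa [summable_mul_left_iff hi'.ne']
  · rw [hv, Mmat_mulVec_apply (hp2 k).ne']
    simp only [b]
    field_simp

theorem tendsto_Mmat_orbit (hp2 : ∀ k, 2 < p k) (hp : Tendsto p atTop atTop)
    (hdiv : ¬ Summable fun k => (p k - 2)⁻¹) (hv : ∀ k, v (k + 1) = Mmat J (p k) *ᵥ v k) :
    Tendsto v atTop (𝓝 fun i => if (i : ℕ) = 0 then ∑ l, v 0 l else 0) := by
  refine tendsto_pi_nhds.2 fun i => ?_
  split_ifs with hi
  · have hrow : ∀ k, v k i = ∑ l, v 0 l - ∑ l ∈ univ.erase i, v k l := fun k => by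
      rw [← sum_Mmat_orbit (fun k => (hp2 k).ne') hv k, ← add_sum_erase _ _ (mem_univ i)]
      ring
    have hrest : Tendsto (fun k => ∑ l ∈ univ.erase i, v k l) atTop
        (𝓝 (∑ l ∈ univ.erase i, 0)) :=
      tendsto_finsetSum _ fun l hl => tendsto_Mmat_orbit_apply_of_ne_zero hp2 hp hdiv hv l
        fun h => (mem_erase.1 hl).1 (Fin.ext (h.trans hi.symm))
    rw [sum_const_zero] at hrest
    simp_rw [hrow]
    simpa only [sub_zero] using tendsto_const_nhds.sub hrest
  · exact tendsto_Mmat_orbit_apply_of_ne_zero hp2 hp hdiv hv i hi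

end Orbit

section PrimesAbove

variable (p0 : ℕ)

theorem infinite_setOf_prime_and_lt : {n | n.Prime ∧ p0 < n}.Infinite :=
  Nat.frequently_atTop_iff_infinite.1 <| frequently_atTop.2 fun a =>
    let ⟨q, hq, hprime⟩ := Nat.exists_infinite_primes (max a p0 + 1)
    ⟨q, by omega, hprime, by omega⟩

theorem lt_nth_prime_and_lt (k : ℕ) : p0 < Nat.nth (fun n => n.Prime ∧ p0 < n) k :=
  (Nat.nth_mem_of_infinite (infinite_setOf_prime_and_lt p0) k).2

theorem tendsto_nth_prime_and_lt :
    Tendsto (Nat.nth fun n => n.Prime ∧ p0 < n) atTop atTop :=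
  (Nat.nth_strictMono (infinite_setOf_prime_and_lt p0)).tendsto_atTop

theorem not_summable_one_div_nth_prime_and_lt :
    ¬ Summable fun k => (1 : ℝ) / Nat.nth (fun n => n.Prime ∧ p0 < n) k := by
  have hinf := infinite_setOf_prime_and_lt p0
  set f := {n | n.Prime ∧ p0 < n}.indicator fun n : ℕ => (1 : ℝ) / n
  have hf : ∀ n ∉ Set.range (Nat.nth fun n => n.Prime ∧ p0 < n), f n = 0 := by
    rw [Nat.range_nth_of_infinite hinf]
    exact fun n hn => Set.indicator_of_notMem hn _
  have hcomp : (fun k => (1 : ℝ) / Nat.nth (fun n => n.Prime ∧ p0 < n) k) =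
      f ∘ Nat.nth fun n => n.Prime ∧ p0 < n :=
    funext fun k => (Set.indicator_of_mem (s := {n | n.Prime ∧ p0 < n})
      (Nat.nth_mem_of_infinite hinf k) fun n : ℕ => (1 : ℝ) / n).symm
  rw [hcomp, (Nat.nth_injective hinf).summable_iff hf, summable_congr_atTop]
  · exact not_summable_one_div_on_primes
  · filter_upwards [eventually_gt_atTop p0] with n hn
    simp [f, Set.indicator, hn]

end PrimesAbove

theorem prodMat_tendsto_general (J : ℕ) (p0 : ℕ) (hp0 : p0.Prime) :
    Filter.Tendsto (prodMat J p0) Filter.atTop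
      (nhds (Matrix.of fun i _ : Fin J => if (i : ℕ) = 0 then (1 : ℝ) else 0)) := by
  set q := Nat.nth fun n => n.Prime ∧ p0 < n
  have hq2 : ∀ k, 2 < (q k : ℝ) := fun k => by
    exact_mod_cast hp0.two_le.trans_lt (lt_nth_prime_and_lt p0 k)
  have hq : Tendsto (fun k => (q k : ℝ)) atTop atTop :=
    tendsto_natCast_atTop_atTop.comp (tendsto_nth_prime_and_lt p0)
  have hdiv : ¬ Summable fun k => ((q k : ℝ) - 2)⁻¹ := fun h =>
    not_summable_one_div_nth_prime_and_lt p0 <| h.of_nonneg_of_le (fun k => by positivity)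
      fun k => by rw [one_div]; exact inv_anti₀ (by linarith [hq2 k]) (by linarith)
  refine tendsto_pi_nhds.2 fun i => tendsto_pi_nhds.2 fun j => ?_
  have hcol := tendsto_Mmat_orbit hq2 hq hdiv (v := fun k i => prodMat J p0 k i j) fun k => rfl
  simpa [prodMat, one_apply] using tendsto_pi_nhds.1 hcol i

theorem prodMat_tendsto (J : ℕ) (hJ : 1 ≤ J) (p0 : ℕ) (hp0 : p0.Prime) :
    Filter.Tendsto (prodMat J p0) Filter.atTop
      (nhds (Matrix.of fun i _ : Fin J => if (i : ℕ) = 0 then (1 : ℝ) else 0)) :=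
  prodMat_tendsto_general J p0 hp0
end

section
/- For each g in {4, 8, 16, 32}, the ratio N_p(g)/N_p(2) of the number of gaps equal to g in the cycle of gaps 𝒢(p#) to the number of gaps equal to 2 in 𝒢(p#) converges to 1 as p → ∞ through the primes. -/
/-!
By the Chinese remainder theorem, the number of `r ∈ [1, p#]` for which all of `r + T` are
totatives of `p#` is `∏_{q ≤ p} (q - ν_q(T))`, where `ν_q(T)` is the number of residues of `T`
mod `q`. For `T = {0, g}` with `g` a power of two, `ν_q` is the same as for `{0, 2}`, and since
`p#` is even this common count is exactly `N_p(2)`. Such an `r` starts a gap `g` unless some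
`r + t` with `0 < t < g` is a totative as well; for each such triple `{0, t, g}` the factor at
`q > g` is `q - 3` against `q - 2`, so its count relative to `N_p(2)` is
`O(∏_{g < q ≤ p} (1 - 1/q))`, which tends to `0` because `∑ 1/q` diverges.
-/

open Finset

open Filter Topology ArithmeticFunction

lemma card_filter_Icc_natCast (n : ℕ) [NeZero n] (f : ZMod n → Prop) [DecidablePred f] :
    #{r ∈ Icc 1 n | f (r : ℕ)} = #{x : ZMod n | f x} := by
  have himage : (Icc 1 n).image (Nat.cast : ℕ → ZMod n) = univ := by
    refine eq_univ_of_forall fun x => mem_image.mpr ⟨n - (-x).val, ?_, ?_⟩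
    · have := (-x).val_lt
      rw [mem_Icc]
      omega
    · rw [Nat.cast_sub (-x).val_lt.le, ZMod.natCast_self, ZMod.natCast_zmod_val, zero_sub,
        neg_neg]
  have hinj : Set.InjOn (Nat.cast : ℕ → ZMod n) (Icc 1 n) := by
    rw [← card_image_iff, himage, card_univ, ZMod.card, Nat.card_Icc, Nat.add_sub_cancel]
  rw [← card_image_of_injOn (hinj.mono (coe_subset.mpr (filter_subset _ _))), ← filter_image,
    himage]

lemma card_image_natCast_pair (q a : ℕ) :
    #(({0, a} : Finset ℕ).image (Nat.cast : ℕ → ZMod q)) = if q ∣ a then 1 else 2 := by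
  rw [image_insert, image_singleton, Nat.cast_zero]
  split_ifs with h
  · simp [(ZMod.natCast_eq_zero_iff a q).mpr h]
  · exact card_pair (Ne.symm ((ZMod.natCast_eq_zero_iff a q).not.mpr h))

lemma card_image_natCast_of_lt {q : ℕ} {T : Finset ℕ} (hT : ∀ t ∈ T, t < q) :
    #(T.image (Nat.cast : ℕ → ZMod q)) = #T := by
  refine card_image_of_injOn fun a ha b hb hab => ?_
  rwa [ZMod.natCast_eq_natCast_iff', Nat.mod_eq_of_lt (hT a ha), Nat.mod_eq_of_lt (hT b hb)] at hab

/-- Bundled as an arithmetic function so that `IsMultiplicative.map_prod_of_prime` turns its value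
at `p#` into a product over the primes `q ≤ p`. -/
def coprimeTranslateCount (T : Finset ℕ) : ArithmeticFunction ℕ :=
  ⟨fun n => #{r ∈ Icc 1 n | ∀ t ∈ T, (r + t).Coprime n}, by simp⟩

section

variable (T : Finset ℕ)

lemma coprimeTranslateCount_apply (n : ℕ) :
    coprimeTranslateCount T n = #{r ∈ Icc 1 n | ∀ t ∈ T, (r + t).Coprime n} := rfl

lemma coprimeTranslateCount_eq_card_isUnit (n : ℕ) [NeZero n] :
    coprimeTranslateCount T n = #{x : ZMod n | ∀ t ∈ T, IsUnit (x + t)} := by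
  rw [coprimeTranslateCount_apply, ← card_filter_Icc_natCast]
  simp only [← Nat.cast_add, ZMod.isUnit_iff_coprime]

lemma isMultiplicative_coprimeTranslateCount : IsMultiplicative (coprimeTranslateCount T) := by
  refine IsMultiplicative.iff_ne_zero.mpr
    ⟨by simp [coprimeTranslateCount_apply], fun {m n} hm hn hmn => ?_⟩
  have : NeZero m := ⟨hm⟩
  have : NeZero n := ⟨hn⟩
  have : NeZero (m * n) := ⟨mul_ne_zero hm hn⟩
  let e := ZMod.chineseRemainder hmn
  simp only [coprimeTranslateCount_eq_card_isUnit, ← card_product]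
  refine card_equiv e.toEquiv fun x => ?_
  have he : ∀ t : ℕ, e (x + t) = ((e x).1 + t, (e x).2 + t) := fun t => by
    rw [map_add, map_natCast]
    rfl
  simp only [mem_filter, mem_univ, true_and, mem_product, RingEquiv.toEquiv_eq_coe,
    EquivLike.coe_coe, ← forall₂_and]
  refine forall₂_congr fun t _ => ?_
  rw [← MulEquiv.isUnit_map e, he, Prod.isUnit_iff]

lemma coprimeTranslateCount_prime {q : ℕ} (hq : q.Prime) :
    coprimeTranslateCount T q = q - #(T.image (Nat.cast : ℕ → ZMod q)) := by
  have : Fact q.Prime := ⟨hq⟩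
  have hfilter : ({x : ZMod q | ∀ t ∈ T, IsUnit (x + t)} : Finset (ZMod q))
      = univ \ (T.image Nat.cast).map (Equiv.neg (ZMod q)).toEmbedding := by
    ext x
    simp [isUnit_iff_ne_zero, eq_neg_iff_add_eq_zero, add_comm]
  rw [coprimeTranslateCount_eq_card_isUnit, hfilter, card_sdiff_of_subset (subset_univ _),
    card_map, card_univ, ZMod.card]

lemma coprimeTranslateCount_primorial (p : ℕ) :
    coprimeTranslateCount T (primorial p) = ∏ q ∈ Nat.primesLE p, coprimeTranslateCount T q :=
  (isMultiplicative_coprimeTranslateCount T).map_prod_of_prime _ fun _ => Nat.prime_of_mem_primesLE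

end

lemma coprimeTranslateCount_pair_two_pos (n : ℕ) [NeZero n] :
    0 < coprimeTranslateCount {0, 2} n := by
  rw [coprimeTranslateCount_eq_card_isUnit]
  refine card_pos.mpr ⟨-1, ?_⟩
  simp [show (-1 + 2 : ZMod n) = 1 by ring]

lemma coprimeTranslateCount_pair_two_pow (k p : ℕ) (hk : k ≠ 0) :
    coprimeTranslateCount {0, 2 ^ k} (primorial p) =
      coprimeTranslateCount {0, 2} (primorial p) := by
  rw [coprimeTranslateCount_primorial, coprimeTranslateCount_primorial]
  refine prod_congr rfl fun q hq => ?_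
  have hq := Nat.prime_of_mem_primesLE hq
  have hdvd : q ∣ 2 ^ k ↔ q ∣ 2 :=
    ⟨hq.dvd_of_dvd_pow, fun h => h.trans (dvd_pow_self 2 hk)⟩
  rw [coprimeTranslateCount_prime _ hq, coprimeTranslateCount_prime _ hq,
    card_image_natCast_pair, card_image_natCast_pair, if_congr hdvd rfl rfl]

lemma coprimeTranslateCount_triple_div_pair_two_le {q t g : ℕ} (hq : q.Prime) (ht : 0 < t)
    (htg : t < g) (hgq : g < q) :
    (coprimeTranslateCount {0, t, g} q : ℝ) / coprimeTranslateCount {0, 2} q ≤ 1 - (q : ℝ)⁻¹ := by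
  have hT : #({0, t, g} : Finset ℕ) = 3 :=
    card_eq_three.mpr ⟨0, t, g, by omega, by omega, by omega, rfl⟩
  rw [coprimeTranslateCount_prime _ hq, coprimeTranslateCount_prime _ hq,
    card_image_natCast_of_lt (by simp; omega), hT, card_image_natCast_of_lt (by simp; omega),
    card_pair two_ne_zero.symm, Nat.cast_sub (by omega), Nat.cast_sub (by omega)]
  have hq3 : (3 : ℝ) ≤ q := by exact_mod_cast (show 3 ≤ q by omega)
  calc ((q : ℝ) - (3 : ℕ)) / (q - (2 : ℕ)) ≤ (q - 1) / q := by
        rw [div_le_div_iff₀ (by push_cast; linarith) (by linarith)]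
        push_cast
        nlinarith
    _ = 1 - (q : ℝ)⁻¹ := by field_simp

lemma matchesGaps_singleton {P r g : ℕ} : MatchesGaps P r [g] ↔ IsNextTot P r (r + g) := by
  simp [MatchesGaps]

lemma Ncount_singleton_le_coprimeTranslateCount (p g : ℕ) :
    Ncount p [g] ≤ coprimeTranslateCount {0, g} (primorial p) := by
  rw [Ncount, coprimeTranslateCount_apply]
  refine card_le_card fun r => ?_
  simp only [mem_filter, matchesGaps_singleton, IsNextTot, mem_insert, mem_singleton,
    forall_eq_or_imp, forall_eq, add_zero]
  exact fun ⟨hr, hcop, _, hcop_g, _⟩ => ⟨hr, hcop, hcop_g⟩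

lemma Ncount_singleton_two {p : ℕ} (hp : 2 ≤ p) :
    Ncount p [2] = coprimeTranslateCount {0, 2} (primorial p) := by
  have h2 : 2 ∣ primorial p := dvd_prod_of_mem _ (Nat.mem_primesLE.mpr ⟨hp, Nat.prime_two⟩)
  refine (Ncount_singleton_le_coprimeTranslateCount p 2).antisymm ?_
  rw [Ncount, coprimeTranslateCount_apply]
  refine card_le_card fun r => ?_
  simp only [mem_filter, matchesGaps_singleton, IsNextTot, mem_insert, mem_singleton,
    forall_eq_or_imp, forall_eq, add_zero]
  rintro ⟨hr, hcop, hcop_2⟩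
  refine ⟨hr, hcop, by omega, hcop_2, fun x hrx hxr hx => ?_⟩
  have hr_odd := Nat.coprime_two_right.mp (hcop.coprime_dvd_right h2)
  have hx_odd := Nat.coprime_two_right.mp (hx.coprime_dvd_right h2)
  obtain rfl : x = r + 1 := by omega
  exact Nat.not_odd_iff_even.mpr hr_odd.add_one hx_odd

lemma coprimeTranslateCount_le_Ncount_singleton_add {g : ℕ} (hg : 0 < g) (p : ℕ) :
    coprimeTranslateCount {0, g} (primorial p) ≤
      Ncount p [g] + ∑ t ∈ Ioo 0 g, coprimeTranslateCount {0, t, g} (primorial p) := by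
  simp only [Ncount, coprimeTranslateCount_apply]
  refine (card_le_card ?_).trans ((card_union_le _ _).trans (Nat.add_le_add_left card_biUnion_le _))
  intro r
  simp only [mem_union, mem_biUnion, mem_filter, matchesGaps_singleton, IsNextTot, mem_insert,
    mem_singleton, forall_eq_or_imp, forall_eq, add_zero, mem_Ioo]
  rintro ⟨hr, hcop, hcop_g⟩
  by_cases hnext : ∀ x, r < x → x < r + g → ¬ x.Coprime (primorial p)
  · exact .inl ⟨hr, hcop, by omega, hcop_g, hnext⟩
  · push Not at hnext
    obtain ⟨x, hrx, hxr, hx⟩ := hnext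
    exact .inr ⟨x - r, by omega, hr, hcop, by rwa [Nat.add_sub_cancel' hrx.le], hcop_g⟩

lemma tendsto_sum_primesLE_inv :
    Tendsto (fun n => ∑ q ∈ Nat.primesLE n, (q : ℝ)⁻¹) atTop atTop := by
  have h := (not_summable_iff_tendsto_nat_atTop_of_nonneg fun n =>
    Set.indicator_nonneg (fun _ _ => by positivity) n).mp not_summable_one_div_on_primes
  refine (h.comp (tendsto_add_atTop_nat 1)).congr fun n => ?_
  simp [Nat.primesLE_eq_filter_range, sum_filter, Set.indicator_apply]

lemma tendsto_prod_primesLE_nhds_zero {f : ℕ → ℝ} (N : ℕ) (hf0 : ∀ q, q.Prime → 0 ≤ f q)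
    (hf : ∀ q, q.Prime → N < q → f q ≤ 1 - (q : ℝ)⁻¹) :
    Tendsto (fun n => ∏ q ∈ Nat.primesLE n, f q) atTop (𝓝 0) := by
  have hprod_nonneg : ∀ n, 0 ≤ ∏ q ∈ Nat.primesLE n, f q :=
    fun n => prod_nonneg fun q hq => hf0 q (Nat.prime_of_mem_primesLE hq)
  set C := (∏ q ∈ Nat.primesLE N, f q) * Real.exp (∑ q ∈ Nat.primesLE N, (q : ℝ)⁻¹)
  have hbound : ∀ n ≥ N,
      ∏ q ∈ Nat.primesLE n, f q ≤ C * Real.exp (-∑ q ∈ Nat.primesLE n, (q : ℝ)⁻¹) := by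
    intro n hn
    have hsub := Nat.primesLE_mono hn
    have htail_mem : ∀ q ∈ Nat.primesLE n \ Nat.primesLE N, q.Prime ∧ N < q := by
      intro q hq
      rw [Finset.mem_sdiff, Nat.mem_primesLE, Nat.mem_primesLE, not_and] at hq
      exact ⟨hq.1.2, Nat.lt_of_not_le fun hqN => hq.2 hqN hq.1.2⟩
    have htail : ∏ q ∈ Nat.primesLE n \ Nat.primesLE N, f q
        ≤ Real.exp (-∑ q ∈ Nat.primesLE n \ Nat.primesLE N, (q : ℝ)⁻¹) := by
      rw [← sum_neg_distrib, Real.exp_sum]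
      refine prod_le_prod (fun q hq => hf0 q (htail_mem q hq).1) fun q hq => ?_
      exact (hf q (htail_mem q hq).1 (htail_mem q hq).2).trans (Real.one_sub_le_exp_neg _)
    calc ∏ q ∈ Nat.primesLE n, f q
        = (∏ q ∈ Nat.primesLE n \ Nat.primesLE N, f q) * ∏ q ∈ Nat.primesLE N, f q :=
          (prod_sdiff hsub).symm
      _ ≤ Real.exp (-∑ q ∈ Nat.primesLE n \ Nat.primesLE N, (q : ℝ)⁻¹) *
          ∏ q ∈ Nat.primesLE N, f q := mul_le_mul_of_nonneg_right htail (hprod_nonneg N)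
      _ = C * Real.exp (-∑ q ∈ Nat.primesLE n, (q : ℝ)⁻¹) := by
          have hexp : Real.exp (∑ q ∈ Nat.primesLE N, (q : ℝ)⁻¹) *
              Real.exp (-∑ q ∈ Nat.primesLE N, (q : ℝ)⁻¹) = 1 := by
            rw [← Real.exp_add, add_neg_cancel, Real.exp_zero]
          rw [← sum_sdiff hsub, neg_add, Real.exp_add]
          linear_combination (-(Real.exp (-∑ q ∈ Nat.primesLE n \ Nat.primesLE N, (q : ℝ)⁻¹) *
            ∏ q ∈ Nat.primesLE N, f q)) * hexp
  have hlim : Tendsto (fun n => C * Real.exp (-∑ q ∈ Nat.primesLE n, (q : ℝ)⁻¹)) atTop (𝓝 0) := by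
    simpa using (Real.tendsto_exp_neg_atTop_nhds_zero.comp tendsto_sum_primesLE_inv).const_mul C
  exact squeeze_zero' (.of_forall hprod_nonneg) ((eventually_ge_atTop N).mono hbound) hlim

lemma tendsto_coprimeTranslateCount_triple_div_pair_two {t g : ℕ} (ht : 0 < t) (htg : t < g) :
    Tendsto (fun p => (coprimeTranslateCount {0, t, g} (primorial p) : ℝ) /
      coprimeTranslateCount {0, 2} (primorial p)) atTop (𝓝 0) := by
  simp_rw [coprimeTranslateCount_primorial, Nat.cast_prod, ← prod_div_distrib]
  exact tendsto_prod_primesLE_nhds_zero g (fun _ _ => by positivity) fun q hq hgq =>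
    coprimeTranslateCount_triple_div_pair_two_le hq ht htg hgq

lemma tendsto_Ncount_two_pow_div_Ncount_two {k : ℕ} (hk : k ≠ 0) :
    Tendsto (fun p => (Ncount p [2 ^ k] : ℝ) / Ncount p [2]) atTop (𝓝 1) := by
  set g := 2 ^ k
  set A : ℕ → ℝ := fun p => coprimeTranslateCount {0, 2} (primorial p)
  set E : ℕ → ℝ := fun p => ∑ t ∈ Ioo 0 g, (coprimeTranslateCount {0, t, g} (primorial p) : ℝ) / A p
  have hE : Tendsto E atTop (𝓝 0) := by
    simpa using tendsto_finsetSum (Ioo 0 g) fun t ht =>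
      tendsto_coprimeTranslateCount_triple_div_pair_two (mem_Ioo.mp ht).1 (mem_Ioo.mp ht).2
  have hA (p : ℕ) : 0 < A p := by
    have := NeZero.of_pos (primorial_pos p)
    exact Nat.cast_pos.mpr (coprimeTranslateCount_pair_two_pos _)
  have hpair (p : ℕ) : coprimeTranslateCount {0, g} (primorial p) = A p := by
    simp only [A, g, coprimeTranslateCount_pair_two_pow k p hk]
  have hupper : ∀ᶠ p in atTop, (Ncount p [g] : ℝ) / Ncount p [2] ≤ 1 := by
    filter_upwards [eventually_ge_atTop 2] with p hp
    rw [Ncount_singleton_two hp, div_le_one (hA p), ← hpair]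
    exact_mod_cast Ncount_singleton_le_coprimeTranslateCount p g
  have hlower : ∀ᶠ p in atTop, 1 - E p ≤ (Ncount p [g] : ℝ) / Ncount p [2] := by
    filter_upwards [eventually_ge_atTop 2] with p hp
    have hcount := coprimeTranslateCount_le_Ncount_singleton_add (Nat.two_pow_pos k) p
    rw [Ncount_singleton_two hp]
    simp only [E, ← sum_div, one_sub_div (hA p).ne']
    gcongr
    rw [← hpair, sub_le_iff_le_add]
    exact_mod_cast hcount
  exact tendsto_of_tendsto_of_tendsto_of_le_of_le' (by simpa using hE.const_sub 1)
    tendsto_const_nhds hlower hupper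

theorem ratio_tendsto_one : ∀ g ∈ ({4, 8, 16, 32} : Finset ℕ),
    Filter.Tendsto (fun p : ℕ => (Ncount p [g] : ℝ) / (Ncount p [2] : ℝ))
      (Filter.atTop ⊓ Filter.principal {p : ℕ | p.Prime}) (nhds 1) := by
  intro g hg
  refine Tendsto.mono_left ?_ inf_le_left
  simp only [mem_insert, mem_singleton] at hg
  rcases hg with rfl | rfl | rfl | rfl
  exacts [tendsto_Ncount_two_pow_div_Ncount_two (k := 2) two_ne_zero,
    tendsto_Ncount_two_pow_div_Ncount_two (k := 3) three_ne_zero,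
    tendsto_Ncount_two_pow_div_Ncount_two (k := 4) four_ne_zero,
    tendsto_Ncount_two_pow_div_Ncount_two (k := 5) (by norm_num)]
end
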